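/- Non-vanishing limit in the convergent case of the scaling law (Corollary 1): in the asymptotic setting with z_t = 0, 0 < z_r < 1/2, and κ_{t0} < 1, for every UE index k the spectral efficiency does not vanish: liminf_{M → ∞} R_k(M) > 0. In other words, although the receiver hardware quality of the APs is degraded as κ_r(M) = κ_{r0}/M^{z_r} → 0, the spectral efficiency converges to a non-zero value. -/

import Mathlib

open Finset Filter Topology

noncomputable section

/-- Fixed system parameters of the cell-free massive MIMO uplink:
`K` UEs, pilot length `τ`, pilot power `ρp`, noise power `σ2`,
power-control coefficients `γ`, pilot correlations `δ` (δ k k' = |φ_k^H φ_{k'}|²),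
and large-scale fading coefficients `β m k` (AP index `m ∈ ℕ`, UE index `k`). -/
structure Params where
  K : ℕ
  τ : ℕ
  ρp : ℝ
  σ2 : ℝ
  γ : Fin K → ℝ
  δ : Fin K → Fin K → ℝ
  β : ℕ → Fin K → ℝ

namespace Params

variable (P : Params)

/-- LMMSE coefficient `c_{mk}` for hardware quality factors `κt, κr`. -/
def c (κt κr : ℝ) (m : ℕ) (k : Fin P.K) : ℝ :=
  Real.sqrt ((P.τ : ℝ) * P.ρp * κr * κt) * P.β m k /
    (P.ρp * ∑ k' : Fin P.K, P.β m k' *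
      (κr * κt * (P.τ : ℝ) * P.δ k k' + (1 - κr * κt)) + P.σ2)

/-- Mean-square of the LMMSE channel estimate `λ_{mk}`. -/
def lam (κt κr : ℝ) (m : ℕ) (k : Fin P.K) : ℝ :=
  Real.sqrt ((P.τ : ℝ) * P.ρp * κr * κt) * P.β m k * P.c κt κr m k

/-- Desired-signal term `A_k` (using APs `0, …, M-1`). -/
def A (κt κr : ℝ) (M : ℕ) (k : Fin P.K) : ℝ :=
  P.γ k * (∑ m ∈ Finset.range M, P.lam κt κr m k) ^ 2

/-- Non-coherent interference term `B_k`. -/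
def B (κt κr : ℝ) (M : ℕ) (k : Fin P.K) : ℝ :=
  ∑ k' : Fin P.K, P.γ k' *
    ((∑ m ∈ Finset.range M, P.lam κt κr m k * P.β m k') +
      P.ρp * (1 - κr) * ∑ m ∈ Finset.range M, (P.c κt κr m k) ^ 2 * (P.β m k') ^ 2)

/-- Coherent interference term `C_k`. -/
def C (κt κr : ℝ) (M : ℕ) (k : Fin P.K) : ℝ :=
  ∑ k' : Fin P.K, P.γ k' * (P.δ k k' + (1 - κt) / (κt * (P.τ : ℝ))) *
    (∑ m ∈ Finset.range M, P.lam κt κr m k * (P.β m k' / P.β m k)) ^ 2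

/-- AP receiver-distortion term `D_k`. -/
def D (κt κr : ℝ) (M : ℕ) (k : Fin P.K) : ℝ :=
  ∑ m ∈ Finset.range M, ∑ k' : Fin P.K, P.γ k' *
    (P.lam κt κr m k * P.β m k' +
      (P.c κt κr m k) ^ 2 * (1 - κr) * P.ρp * (P.β m k') ^ 2 +
      (P.c κt κr m k) ^ 2 * κr * P.ρp * P.β m k' *
        ((P.τ : ℝ) * κt * P.δ k k' + (1 - κt)))

/-- Noise term `E_k` for uplink power `ρu`. -/
def E (κt κr ρu : ℝ) (M : ℕ) (k : Fin P.K) : ℝ :=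
  (P.σ2 / ρu) * ∑ m ∈ Finset.range M, P.lam κt κr m k

/-- Effective SINR of UE `k` (Theorem 1). -/
def SINR (κt κr ρu : ℝ) (M : ℕ) (k : Fin P.K) : ℝ :=
  κr * κt * P.A κt κr M k /
    (κr * P.B κt κr M k + κr * P.C κt κr M k - κr * κt * P.A κt κr M k +
      (1 - κr) * P.D κt κr M k + P.E κt κr ρu M k)

/-- Spectral efficiency of UE `k` (Theorem 1): `R_k = log₂(1 + SINR_k)`. -/
def R (κt κr ρu : ℝ) (M : ℕ) (k : Fin P.K) : ℝ :=
  Real.logb 2 (1 + P.SINR κt κr ρu M k)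

/-- Standing assumptions on the fixed parameters: `K ≥ 1`, `τ ≥ 1`, `ρp, σ² > 0`,
`γ_k ∈ (0,1]`, `δ_{kk'} ∈ [0,1]`, `δ_{kk} = 1`. -/
def Valid : Prop :=
  1 ≤ P.K ∧ 1 ≤ P.τ ∧ 0 < P.ρp ∧ 0 < P.σ2 ∧
  (∀ k, 0 < P.γ k ∧ P.γ k ≤ 1) ∧
  (∀ k k', 0 ≤ P.δ k k' ∧ P.δ k k' ≤ 1) ∧
  (∀ k, P.δ k k = 1)

end Params

/-!
Write `S = ∑_{m<M} λ_{mk}` and let `d_{mk} ≥ σ²` be the denominator of `c_{mk}`. Since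
`c_{mk}² = λ_{mk} / d_{mk}`, the terms `B_k`, `D_k`, `E_k` are `O(S)`, while `C_k = O(S² / κ_t)`
and `C_k ≥ γ_k S²` (its `k' = k` term). So the SINR denominator lies between
`κ_r (1 - κ_t) γ_k S²` and `κ_r O(S²) + O(S)`, against the numerator `κ_r κ_t γ_k S²`. The first
bound gives `SINR_k ≤ κ_t / (1 - κ_t)`, without which the real `liminf` could be a junk value; the
second gives a positive lower bound once `κ_r S` is large. Finally `λ_{mk} ≥ const · κ_r κ_t`, so
`κ_r S ≳ κ_r² M = κ_{r0}² M^{1 - 2 z_r} → ∞` because `z_r < 1/2`.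
-/

theorem div_rpow_mem_Ioc {a x z : ℝ} (ha : a ∈ Set.Ioc 0 1) (hx : 1 ≤ x) (hz : 0 ≤ z) :
    a / x ^ z ∈ Set.Ioc 0 1 := by
  have hxz : 1 ≤ x ^ z := Real.one_le_rpow hx hz
  exact ⟨div_pos ha.1 (by linarith), (div_le_one (by linarith)).2 (ha.2.trans hxz)⟩

theorem tendsto_div_rpow_sq_mul_atTop {a z : ℝ} (ha : 0 < a) (hz : z < 1 / 2) :
    Tendsto (fun x : ℝ => (a / x ^ z) ^ 2 * x) atTop atTop := by
  have heq : ∀ᶠ x : ℝ in atTop, a ^ 2 * x ^ (1 - 2 * z) = (a / x ^ z) ^ 2 * x := by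
    filter_upwards [eventually_gt_atTop 0] with x hx
    rw [Real.rpow_sub hx, Real.rpow_one, mul_comm 2 z, Real.rpow_mul hx.le, Real.rpow_two]
    have := Real.rpow_pos_of_pos hx z
    field_simp
  exact ((tendsto_rpow_atTop (by linarith)).const_mul_atTop (by positivity)).congr' heq

theorem liminf_logb_one_add_pos {ι : Type*} {l : Filter ι} [l.NeBot] {u : ι → ℝ} {b ε c : ℝ}
    (hb : 1 < b) (hε : 0 < ε) (hlow : ∀ᶠ i in l, ε ≤ u i) (hup : ∀ᶠ i in l, u i ≤ c) :
    0 < liminf (fun i => Real.logb b (1 + u i)) l := by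
  have hbounded : ∀ᶠ i in l, Real.logb b (1 + u i) ≤ Real.logb b (1 + c) :=
    (hlow.and hup).mono fun i hi =>
      Real.logb_le_logb_of_le hb (by linarith [hi.1]) (by linarith [hi.2])
  calc 0 < Real.logb b (1 + ε) := Real.logb_pos hb (by linarith)
    _ ≤ liminf (fun i => Real.logb b (1 + u i)) l :=
        le_liminf_of_le (IsCoboundedUnder.of_frequently_le hbounded.frequently)
          (hlow.mono fun i hi => Real.logb_le_logb_of_le hb (by linarith) (by linarith))

namespace Params

theorem Valid.ρp_pos {P : Params} (hP : P.Valid) : 0 < P.ρp := hP.2.2.1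

theorem Valid.σ2_pos {P : Params} (hP : P.Valid) : 0 < P.σ2 := hP.2.2.2.1

theorem Valid.one_le_τ {P : Params} (hP : P.Valid) : (1 : ℝ) ≤ P.τ := by exact_mod_cast hP.2.1

theorem Valid.γ_pos {P : Params} (hP : P.Valid) (k : Fin P.K) : 0 < P.γ k := (hP.2.2.2.2.1 k).1

theorem Valid.γ_le_one {P : Params} (hP : P.Valid) (k : Fin P.K) : P.γ k ≤ 1 := (hP.2.2.2.2.1 k).2

theorem Valid.δ_nonneg {P : Params} (hP : P.Valid) (k k' : Fin P.K) : 0 ≤ P.δ k k' :=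
  (hP.2.2.2.2.2.1 k k').1

theorem Valid.δ_le_one {P : Params} (hP : P.Valid) (k k' : Fin P.K) : P.δ k k' ≤ 1 :=
  (hP.2.2.2.2.2.1 k k').2

theorem Valid.δ_self {P : Params} (hP : P.Valid) (k : Fin P.K) : P.δ k k = 1 := hP.2.2.2.2.2.2 k

def cDen (P : Params) (κt κr : ℝ) (m : ℕ) (k : Fin P.K) : ℝ :=
  P.ρp * ∑ k' : Fin P.K, P.β m k' * (κr * κt * (P.τ : ℝ) * P.δ k k' + (1 - κr * κt)) + P.σ2

def lamSum (P : Params) (κt κr : ℝ) (M : ℕ) (k : Fin P.K) : ℝ :=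
  ∑ m ∈ range M, P.lam κt κr m k

def sinrDen (P : Params) (κt κr ρu : ℝ) (M : ℕ) (k : Fin P.K) : ℝ :=
  κr * P.B κt κr M k + κr * P.C κt κr M k - κr * κt * P.A κt κr M k +
    (1 - κr) * P.D κt κr M k + P.E κt κr ρu M k

variable {P : Params} {κt κr : ℝ} {m : ℕ} {k : Fin P.K}

theorem c_eq_div_cDen :
    P.c κt κr m k = √((P.τ : ℝ) * P.ρp * κr * κt) * P.β m k / P.cDen κt κr m k := rfl

theorem A_eq (M : ℕ) : P.A κt κr M k = P.γ k * P.lamSum κt κr M k ^ 2 := rfl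

theorem E_eq (ρu : ℝ) (M : ℕ) : P.E κt κr ρu M k = P.σ2 / ρu * P.lamSum κt κr M k := rfl

theorem SINR_eq (ρu : ℝ) (M : ℕ) : P.SINR κt κr ρu M k =
    κr * κt * (P.γ k * P.lamSum κt κr M k ^ 2) / P.sinrDen κt κr ρu M k := rfl

theorem σ2_le_cDen (hP : P.Valid) (hβ : ∀ k', 0 ≤ P.β m k') (hκt : κt ∈ Set.Icc 0 1)
    (hκr : κr ∈ Set.Icc 0 1) : P.σ2 ≤ P.cDen κt κr m k := by
  have hκ : κr * κt ≤ 1 := mul_le_one₀ hκr.2 hκt.1 hκt.2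
  have hsum : 0 ≤ ∑ k', P.β m k' * (κr * κt * (P.τ : ℝ) * P.δ k k' + (1 - κr * κt)) :=
    sum_nonneg fun k' _ => mul_nonneg (hβ k') <| add_nonneg
      (mul_nonneg (by have := hκr.1; have := hκt.1; positivity) (hP.δ_nonneg k k')) (by linarith)
  unfold cDen
  linarith [mul_nonneg hP.ρp_pos.le hsum]

theorem cDen_pos (hP : P.Valid) (hβ : ∀ k', 0 ≤ P.β m k') (hκt : κt ∈ Set.Icc 0 1)
    (hκr : κr ∈ Set.Icc 0 1) : 0 < P.cDen κt κr m k :=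
  hP.σ2_pos.trans_le (σ2_le_cDen hP hβ hκt hκr)

theorem cDen_le (hP : P.Valid) {βmax : ℝ} (hβ : ∀ k', 0 ≤ P.β m k' ∧ P.β m k' ≤ βmax)
    (hκt : κt ∈ Set.Icc 0 1) (hκr : κr ∈ Set.Icc 0 1) :
    P.cDen κt κr m k ≤ P.ρp * (P.K * (βmax * (P.τ + 1))) + P.σ2 := by
  have hκ : κr * κt ≤ 1 := mul_le_one₀ hκr.2 hκt.1 hκt.2
  have hκ0 : 0 ≤ κr * κt := mul_nonneg hκr.1 hκt.1
  have hτ : (0 : ℝ) ≤ P.τ := Nat.cast_nonneg _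
  have hterm (k' : Fin P.K) :
      P.β m k' * (κr * κt * (P.τ : ℝ) * P.δ k k' + (1 - κr * κt)) ≤ βmax * (P.τ + 1) := by
    have hδ0 := hP.δ_nonneg k k'
    have hκδ : κr * κt * P.δ k k' ≤ 1 := mul_le_one₀ hκ hδ0 (hP.δ_le_one k k')
    apply mul_le_mul (hβ k').2 _ (add_nonneg (by positivity) (by linarith))
      ((hβ k').1.trans (hβ k').2)
    nlinarith
  have := hP.ρp_pos
  unfold cDen
  gcongr
  simpa using sum_le_sum fun k' (_ : k' ∈ univ) => hterm k'

theorem lam_eq (hP : P.Valid) (hκt : 0 ≤ κt) (hκr : 0 ≤ κr) :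
    P.lam κt κr m k = P.τ * P.ρp * κr * κt * P.β m k ^ 2 / P.cDen κt κr m k := by
  have hs : 0 ≤ (P.τ : ℝ) * P.ρp * κr * κt := by have := hP.ρp_pos; positivity
  rw [lam, c_eq_div_cDen]
  linear_combination P.β m k ^ 2 / P.cDen κt κr m k * Real.mul_self_sqrt hs

theorem c_sq_eq (hP : P.Valid) (hκt : 0 ≤ κt) (hκr : 0 ≤ κr) :
    P.c κt κr m k ^ 2 = P.lam κt κr m k / P.cDen κt κr m k := by
  have hs : 0 ≤ (P.τ : ℝ) * P.ρp * κr * κt := by have := hP.ρp_pos; positivity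
  rw [lam_eq hP hκt hκr, c_eq_div_cDen, div_pow, mul_pow, Real.sq_sqrt hs]
  ring

theorem lam_nonneg (hP : P.Valid) (hβ : ∀ k', 0 ≤ P.β m k') (hκt : κt ∈ Set.Icc 0 1)
    (hκr : κr ∈ Set.Icc 0 1) : 0 ≤ P.lam κt κr m k := by
  have := hP.ρp_pos
  have := cDen_pos (k := k) hP hβ hκt hκr
  rw [lam_eq hP hκt.1 hκr.1]
  have := hκt.1; have := hκr.1
  positivity

theorem c_sq_le (hP : P.Valid) (hβ : ∀ k', 0 ≤ P.β m k') (hκt : κt ∈ Set.Icc 0 1)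
    (hκr : κr ∈ Set.Icc 0 1) : P.c κt κr m k ^ 2 ≤ P.lam κt κr m k / P.σ2 := by
  rw [c_sq_eq hP hκt.1 hκr.1]
  exact div_le_div_of_nonneg_left (lam_nonneg hP hβ hκt hκr) hP.σ2_pos
    (σ2_le_cDen hP hβ hκt hκr)

theorem lam_ge (hP : P.Valid) {βmin βmax : ℝ} (hβmin : 0 < βmin)
    (hβ : ∀ m k', βmin ≤ P.β m k' ∧ P.β m k' ≤ βmax) (hκt : κt ∈ Set.Icc 0 1)
    (hκr : κr ∈ Set.Icc 0 1) (m : ℕ) :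
    κr * κt * (P.τ * P.ρp * βmin ^ 2 / (P.ρp * (P.K * (βmax * (P.τ + 1))) + P.σ2)) ≤
      P.lam κt κr m k := by
  have hβ0 k' : 0 ≤ P.β m k' := hβmin.le.trans (hβ m k').1
  have hden := cDen_le (k := k) hP (fun k' => ⟨hβ0 k', (hβ m k').2⟩) hκt hκr
  have hden_pos := cDen_pos (k := k) hP hβ0 hκt hκr
  have := hκt.1; have := hκr.1; have := hP.ρp_pos
  rw [lam_eq hP hκt.1 hκr.1, ← mul_div_assoc]
  apply div_le_div₀ (by positivity) _ hden_pos hden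
  have := pow_le_pow_left₀ hβmin.le (hβ m k).1 2
  nlinarith [mul_le_mul_of_nonneg_left this (by positivity : (0 : ℝ) ≤ P.τ * P.ρp * κr * κt)]

theorem sum_γ_mul_le (hP : P.Valid) {x : Fin P.K → ℝ} {b : ℝ}
    (hx : ∀ k', 0 ≤ x k' ∧ x k' ≤ b) : ∑ k', P.γ k' * x k' ≤ P.K * b :=
  calc ∑ k', P.γ k' * x k' ≤ ∑ _k' : Fin P.K, b := sum_le_sum fun k' _ =>
        (mul_le_of_le_one_left (hx k').1 (hP.γ_le_one k')).trans (hx k').2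
    _ = P.K * b := by simp

theorem lamSum_nonneg (hP : P.Valid) (hβ : ∀ m k', 0 ≤ P.β m k') (hκt : κt ∈ Set.Icc 0 1)
    (hκr : κr ∈ Set.Icc 0 1) (M : ℕ) : 0 ≤ P.lamSum κt κr M k :=
  sum_nonneg fun m _ => lam_nonneg hP (hβ m) hκt hκr

theorem B_nonneg (hP : P.Valid) (hβ : ∀ m k', 0 ≤ P.β m k') (hκt : κt ∈ Set.Icc 0 1)
    (hκr : κr ∈ Set.Icc 0 1) (M : ℕ) : 0 ≤ P.B κt κr M k := by
  refine sum_nonneg fun k' _ => mul_nonneg (hP.γ_pos k').le (add_nonneg ?_ ?_)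
  · exact sum_nonneg fun m _ => mul_nonneg (lam_nonneg hP (hβ m) hκt hκr) (hβ m k')
  · exact mul_nonneg (mul_nonneg hP.ρp_pos.le (sub_nonneg.2 hκr.2))
      (sum_nonneg fun m _ => by positivity)

theorem B_le (hP : P.Valid) {βmax : ℝ} (hβ : ∀ m k', 0 ≤ P.β m k' ∧ P.β m k' ≤ βmax)
    (hκt : κt ∈ Set.Icc 0 1) (hκr : κr ∈ Set.Icc 0 1) (M : ℕ) :
    P.B κt κr M k ≤ P.K * (βmax * (1 + P.ρp * βmax / P.σ2) * P.lamSum κt κr M k) := by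
  have hρp := hP.ρp_pos
  have hβ0 m k' : 0 ≤ P.β m k' := (hβ m k').1
  have hterm (m : ℕ) (k' : Fin P.K) :
      P.lam κt κr m k * P.β m k' + P.ρp * (1 - κr) * (P.c κt κr m k ^ 2 * P.β m k' ^ 2) ≤
        βmax * (1 + P.ρp * βmax / P.σ2) * P.lam κt κr m k := by
    have hlam := lam_nonneg (k := k) hP (hβ0 m) hκt hκr
    have hc := c_sq_le (k := k) hP (hβ0 m) hκt hκr
    obtain ⟨hβ0', hβle⟩ := hβ m k'
    have hκr' : 1 - κr ≤ 1 := by linarith [hκr.1]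
    have hκr'' : 0 ≤ 1 - κr := by linarith [hκr.2]
    have hlamσ : 0 ≤ P.lam κt κr m k / P.σ2 := div_nonneg hlam hP.σ2_pos.le
    calc P.lam κt κr m k * P.β m k' + P.ρp * (1 - κr) * (P.c κt κr m k ^ 2 * P.β m k' ^ 2)
        ≤ P.lam κt κr m k * βmax + P.ρp * 1 * (P.lam κt κr m k / P.σ2 * βmax ^ 2) := by
          gcongr
      _ = βmax * (1 + P.ρp * βmax / P.σ2) * P.lam κt κr m k := by ring
  refine sum_γ_mul_le hP fun k' => ?_
  rw [mul_sum, ← sum_add_distrib, lamSum, mul_sum]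
  refine ⟨sum_nonneg fun m _ => add_nonneg ?_ ?_, sum_le_sum fun m _ => hterm m k'⟩
  · exact mul_nonneg (lam_nonneg hP (hβ0 m) hκt hκr) (hβ0 m k')
  · exact mul_nonneg (mul_nonneg hρp.le (by linarith [hκr.2])) (by positivity)

theorem lam_mul_div_self (m : ℕ) : P.lam κt κr m k * (P.β m k / P.β m k) = P.lam κt κr m k := by
  by_cases h : P.β m k = 0
  · simp [lam, h]
  · rw [div_self h, mul_one]

theorem C_ge (hP : P.Valid) (hκt : κt ∈ Set.Icc 0 1) (M : ℕ) :
    P.γ k * P.lamSum κt κr M k ^ 2 ≤ P.C κt κr M k := by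
  have hcorr : 0 ≤ (1 - κt) / (κt * P.τ) :=
    div_nonneg (by linarith [hκt.2]) (mul_nonneg hκt.1 (Nat.cast_nonneg _))
  have hsum : ∑ m ∈ range M, P.lam κt κr m k * (P.β m k / P.β m k) = P.lamSum κt κr M k :=
    sum_congr rfl fun m _ => lam_mul_div_self m
  calc P.γ k * P.lamSum κt κr M k ^ 2
      ≤ P.γ k * (P.δ k k + (1 - κt) / (κt * P.τ)) *
          (∑ m ∈ range M, P.lam κt κr m k * (P.β m k / P.β m k)) ^ 2 := by
        rw [hP.δ_self k, hsum]
        nlinarith [mul_nonneg (mul_nonneg (hP.γ_pos k).le hcorr) (sq_nonneg (P.lamSum κt κr M k))]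
    _ ≤ P.C κt κr M k :=
        single_le_sum (f := fun k' => P.γ k' * (P.δ k k' + (1 - κt) / (κt * P.τ)) *
            (∑ m ∈ range M, P.lam κt κr m k * (P.β m k' / P.β m k)) ^ 2)
          (fun k' _ => mul_nonneg (mul_nonneg (hP.γ_pos k').le
            (add_nonneg (hP.δ_nonneg k k') hcorr)) (sq_nonneg _)) (mem_univ k)

theorem C_le (hP : P.Valid) {βmin βmax : ℝ} (hβmin : 0 < βmin)
    (hβ : ∀ m k', βmin ≤ P.β m k' ∧ P.β m k' ≤ βmax) (hκt : κt ∈ Set.Ioc 0 1)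
    (hκr : κr ∈ Set.Icc 0 1) (M : ℕ) :
    P.C κt κr M k ≤ P.K / κt * (βmax / βmin) ^ 2 * P.lamSum κt κr M k ^ 2 := by
  have hτ := hP.one_le_τ
  have hκt' : κt ∈ Set.Icc 0 1 := ⟨hκt.1.le, hκt.2⟩
  have hβ0 m k' : 0 ≤ P.β m k' := hβmin.le.trans (hβ m k').1
  have hcoef (k' : Fin P.K) : P.δ k k' + (1 - κt) / (κt * P.τ) ≤ 1 / κt := by
    have h1 : (1 - κt) / (κt * P.τ) ≤ (1 - κt) / κt :=
      div_le_div_of_nonneg_left (by linarith [hκt.2]) hκt.1 (le_mul_of_one_le_right hκt.1.le hτ)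
    have h2 : 1 + (1 - κt) / κt = 1 / κt := by rw [one_add_div hκt.1.ne', add_sub_cancel]
    linarith [hP.δ_le_one k k']
  have hinner (k' : Fin P.K) :
      0 ≤ ∑ m ∈ range M, P.lam κt κr m k * (P.β m k' / P.β m k) ∧
        ∑ m ∈ range M, P.lam κt κr m k * (P.β m k' / P.β m k) ≤
          βmax / βmin * P.lamSum κt κr M k := by
    rw [lamSum, mul_sum]
    refine ⟨sum_nonneg fun m _ => ?_, sum_le_sum fun m _ => ?_⟩
    · exact mul_nonneg (lam_nonneg hP (hβ0 m) hκt' hκr) (div_nonneg (hβ0 m k') (hβ0 m k))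
    · rw [mul_comm]
      exact mul_le_mul_of_nonneg_right (div_le_div₀ (hβmin.le.trans (hβ m k').1 |>.trans
        (hβ m k').2) (hβ m k').2 hβmin (hβ m k).1) (lam_nonneg hP (hβ0 m) hκt' hκr)
  have hcorr : 0 ≤ (1 - κt) / (κt * P.τ) :=
    div_nonneg (by linarith [hκt.2]) (mul_nonneg hκt.1.le (Nat.cast_nonneg _))
  calc P.C κt κr M k
      = ∑ k', P.γ k' * ((P.δ k k' + (1 - κt) / (κt * P.τ)) *
          (∑ m ∈ range M, P.lam κt κr m k * (P.β m k' / P.β m k)) ^ 2) := by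
        simp only [C, mul_assoc]
    _ ≤ P.K * (1 / κt * (βmax / βmin * P.lamSum κt κr M k) ^ 2) :=
        sum_γ_mul_le hP fun k' => ⟨?_, ?_⟩
    _ = P.K / κt * (βmax / βmin) ^ 2 * P.lamSum κt κr M k ^ 2 := by ring
  · exact mul_nonneg (add_nonneg (hP.δ_nonneg k k') hcorr) (sq_nonneg _)
  · exact mul_le_mul (hcoef k') (pow_le_pow_left₀ (hinner k').1 (hinner k').2 2) (sq_nonneg _)
      (by have := hκt.1; positivity)

theorem D_summand_bounds (hP : P.Valid) {βmax : ℝ} {k' : Fin P.K}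
    (hβ : ∀ j, 0 ≤ P.β m j) (hβmax : P.β m k' ≤ βmax)
    (hκt : κt ∈ Set.Icc 0 1) (hκr : κr ∈ Set.Icc 0 1) :
    0 ≤ P.lam κt κr m k * P.β m k' + P.c κt κr m k ^ 2 * (1 - κr) * P.ρp * P.β m k' ^ 2 +
        P.c κt κr m k ^ 2 * κr * P.ρp * P.β m k' * (P.τ * κt * P.δ k k' + (1 - κt)) ∧
      P.lam κt κr m k * P.β m k' + P.c κt κr m k ^ 2 * (1 - κr) * P.ρp * P.β m k' ^ 2 +
        P.c κt κr m k ^ 2 * κr * P.ρp * P.β m k' * (P.τ * κt * P.δ k k' + (1 - κt)) ≤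
      βmax * (1 + P.ρp * (βmax + P.τ) / P.σ2) * P.lam κt κr m k := by
  have hlam := lam_nonneg (k := k) hP hβ hκt hκr
  have hc := c_sq_le (k := k) hP hβ hκt hκr
  have hρp := hP.ρp_pos
  have hσ2 := hP.σ2_pos
  have hτ := hP.one_le_τ
  have hδ0 := hP.δ_nonneg k k'
  have hδ1 := hP.δ_le_one k k'
  obtain ⟨hκt0, hκt1⟩ := hκt
  obtain ⟨hκr0, hκr1⟩ := hκr
  have hβ0 := hβ k'
  have hβmax0 : 0 ≤ βmax := hβ0.trans hβmax
  have hy0 : 0 ≤ P.τ * κt * P.δ k k' + (1 - κt) := by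
    have : 0 ≤ (P.τ : ℝ) * κt * P.δ k k' := by positivity
    linarith
  have hy : P.τ * κt * P.δ k k' + (1 - κt) ≤ P.τ := by
    nlinarith [mul_le_mul_of_nonneg_left hδ1 (by positivity : (0 : ℝ) ≤ P.τ * κt)]
  have hmix0 : 0 ≤ (1 - κr) * P.β m k' + κr * (P.τ * κt * P.δ k k' + (1 - κt)) := by
    have : 0 ≤ 1 - κr := by linarith
    positivity
  have hmix : (1 - κr) * P.β m k' + κr * (P.τ * κt * P.δ k k' + (1 - κt)) ≤ βmax + P.τ := by
    nlinarith [mul_nonneg hκr0 hβ0, mul_le_mul_of_nonneg_left hy hκr0]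
  have hsplit :
      P.lam κt κr m k * P.β m k' + P.c κt κr m k ^ 2 * (1 - κr) * P.ρp * P.β m k' ^ 2 +
        P.c κt κr m k ^ 2 * κr * P.ρp * P.β m k' * (P.τ * κt * P.δ k k' + (1 - κt)) =
      P.lam κt κr m k * P.β m k' + P.c κt κr m k ^ 2 * P.ρp * P.β m k' *
        ((1 - κr) * P.β m k' + κr * (P.τ * κt * P.δ k k' + (1 - κt))) := by ring
  rw [hsplit]
  refine ⟨by positivity, ?_⟩
  have hlamσ : 0 ≤ P.lam κt κr m k / P.σ2 := by positivity
  calc P.lam κt κr m k * P.β m k' + P.c κt κr m k ^ 2 * P.ρp * P.β m k' *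
        ((1 - κr) * P.β m k' + κr * (P.τ * κt * P.δ k k' + (1 - κt)))
      ≤ P.lam κt κr m k * βmax + P.lam κt κr m k / P.σ2 * P.ρp * βmax * (βmax + P.τ) := by
        gcongr
    _ = βmax * (1 + P.ρp * (βmax + P.τ) / P.σ2) * P.lam κt κr m k := by ring

theorem D_nonneg (hP : P.Valid) (hβ : ∀ m k', 0 ≤ P.β m k') (hκt : κt ∈ Set.Icc 0 1)
    (hκr : κr ∈ Set.Icc 0 1) (M : ℕ) : 0 ≤ P.D κt κr M k :=
  sum_nonneg fun m _ => sum_nonneg fun k' _ => mul_nonneg (hP.γ_pos k').le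
    (D_summand_bounds hP (hβ m) le_rfl hκt hκr).1

theorem D_le (hP : P.Valid) {βmax : ℝ} (hβ : ∀ m k', 0 ≤ P.β m k' ∧ P.β m k' ≤ βmax)
    (hκt : κt ∈ Set.Icc 0 1) (hκr : κr ∈ Set.Icc 0 1) (M : ℕ) :
    P.D κt κr M k ≤ P.K * (βmax * (1 + P.ρp * (βmax + P.τ) / P.σ2) * P.lamSum κt κr M k) := by
  calc P.D κt κr M k
      ≤ ∑ m ∈ range M, P.K * (βmax * (1 + P.ρp * (βmax + P.τ) / P.σ2) * P.lam κt κr m k) :=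
        sum_le_sum fun m _ => sum_γ_mul_le hP fun k' =>
          D_summand_bounds hP (fun k' => (hβ m k').1) (hβ m k').2 hκt hκr
    _ = P.K * (βmax * (1 + P.ρp * (βmax + P.τ) / P.σ2) * P.lamSum κt κr M k) := by
        rw [lamSum, mul_sum, mul_sum]

theorem sinrDen_ge (hP : P.Valid) (hβ : ∀ m k', 0 ≤ P.β m k') (hκt : κt ∈ Set.Icc 0 1)
    (hκr : κr ∈ Set.Icc 0 1) {ρu : ℝ} (hρu : 0 ≤ ρu) (M : ℕ) :
    κr * (1 - κt) * (P.γ k * P.lamSum κt κr M k ^ 2) ≤ P.sinrDen κt κr ρu M k := by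
  have hB := mul_nonneg hκr.1 (B_nonneg (k := k) hP hβ hκt hκr M)
  have hC := mul_le_mul_of_nonneg_left (C_ge (κr := κr) (k := k) hP hκt M) hκr.1
  have hD := mul_nonneg (sub_nonneg.2 hκr.2) (D_nonneg (k := k) hP hβ hκt hκr M)
  have hE : 0 ≤ P.E κt κr ρu M k :=
    mul_nonneg (div_nonneg hP.σ2_pos.le hρu) (lamSum_nonneg hP hβ hκt hκr M)
  rw [sinrDen, A_eq]
  linarith

theorem sinrDen_le (hP : P.Valid) {βmin βmax : ℝ} (hβmin : 0 < βmin)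
    (hβ : ∀ m k', βmin ≤ P.β m k' ∧ P.β m k' ≤ βmax) (hκt : κt ∈ Set.Ioc 0 1)
    (hκr : κr ∈ Set.Icc 0 1) (ρu : ℝ) (M : ℕ) :
    P.sinrDen κt κr ρu M k ≤ κr * (P.K / κt * (βmax / βmin) ^ 2) * P.lamSum κt κr M k ^ 2 +
      (P.K * βmax * (2 + P.ρp * (2 * βmax + P.τ) / P.σ2) + P.σ2 / ρu) * P.lamSum κt κr M k := by
  have hβ0 m k' : 0 ≤ P.β m k' := hβmin.le.trans (hβ m k').1
  have hβ' m k' : 0 ≤ P.β m k' ∧ P.β m k' ≤ βmax := ⟨hβ0 m k', (hβ m k').2⟩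
  have hκt' : κt ∈ Set.Icc 0 1 := ⟨hκt.1.le, hκt.2⟩
  have hS := lamSum_nonneg (k := k) hP hβ0 hκt' hκr M
  have hA : 0 ≤ κr * κt * P.A κt κr M k := by
    have := hκr.1; have := hκt.1; have := hP.γ_pos k; rw [A_eq]; positivity
  have hB := mul_le_mul_of_nonneg_left (B_le (k := k) hP hβ' hκt' hκr M) hκr.1
  have hC := mul_le_mul_of_nonneg_left (C_le (k := k) hP hβmin hβ hκt hκr M) hκr.1
  have hD := D_le (k := k) hP hβ' hκt' hκr M
  have hD' := mul_nonneg hκr.1 (D_nonneg (k := k) hP hβ0 hκt' hκr M)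
  have hBS : 0 ≤ (1 - κr) * (P.K * (βmax * (1 + P.ρp * βmax / P.σ2) * P.lamSum κt κr M k)) := by
    have := hP.ρp_pos; have := hP.σ2_pos; have := (hβ' 0 k).1.trans (hβ' 0 k).2
    exact mul_nonneg (sub_nonneg.2 hκr.2) (by positivity)
  rw [sinrDen, E_eq]
  linear_combination hB + hC + hD + hA + hD' + hBS

theorem SINR_le (hP : P.Valid) (hβ : ∀ m k', 0 ≤ P.β m k') (hκt : κt ∈ Set.Ico 0 1)
    (hκr : κr ∈ Set.Icc 0 1) {ρu : ℝ} (hρu : 0 ≤ ρu) (M : ℕ) :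
    P.SINR κt κr ρu M k ≤ κt / (1 - κt) := by
  have hκt' : κt ∈ Set.Icc 0 1 := ⟨hκt.1, hκt.2.le⟩
  have h1κt : 0 < 1 - κt := sub_pos.2 hκt.2
  have hden := sinrDen_ge (k := k) hP hβ hκt' hκr hρu M
  have := hκt.1; have := hκr.1; have := hP.γ_pos k
  have hden0 : 0 ≤ κr * (1 - κt) * (P.γ k * P.lamSum κt κr M k ^ 2) := by positivity
  rw [SINR_eq]
  refine div_le_of_le_mul₀ (hden0.trans hden) (by positivity) ?_
  calc κr * κt * (P.γ k * P.lamSum κt κr M k ^ 2)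
      = κt / (1 - κt) * (κr * (1 - κt) * (P.γ k * P.lamSum κt κr M k ^ 2)) := by
        field_simp
    _ ≤ κt / (1 - κt) * P.sinrDen κt κr ρu M k := by gcongr

theorem SINR_ge (hP : P.Valid) {βmin βmax : ℝ} (hβmin : 0 < βmin)
    (hβ : ∀ m k', βmin ≤ P.β m k' ∧ P.β m k' ≤ βmax) (hκt : κt ∈ Set.Ioo 0 1)
    (hκr : κr ∈ Set.Ioc 0 1) {ρu : ℝ} (hρu : 0 ≤ ρu) {M : ℕ} (hS : 0 < P.lamSum κt κr M k)
    (hlarge : P.K * βmax * (2 + P.ρp * (2 * βmax + P.τ) / P.σ2) + P.σ2 / ρu ≤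
      κr * P.lamSum κt κr M k) :
    κt * P.γ k / (P.K / κt * (βmax / βmin) ^ 2 + 1) ≤ P.SINR κt κr ρu M k := by
  have hβ0 m k' : 0 ≤ P.β m k' := hβmin.le.trans (hβ m k').1
  have hκt' : κt ∈ Set.Icc 0 1 := ⟨hκt.1.le, hκt.2.le⟩
  have hκr' : κr ∈ Set.Icc 0 1 := ⟨hκr.1.le, hκr.2⟩
  set S := P.lamSum κt κr M k
  set a := P.K / κt * (βmax / βmin) ^ 2
  have ha : 0 ≤ a := by have := hκt.1; positivity
  have hγ := hP.γ_pos k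
  have h1κt := sub_pos.2 hκt.2
  have hκr0 := hκr.1
  have hκt0 := hκt.1
  have hden0 : 0 < κr * (1 - κt) * (P.γ k * S ^ 2) := by positivity
  have hden_pos : 0 < P.sinrDen κt κr ρu M k :=
    hden0.trans_le (sinrDen_ge (k := k) hP hβ0 hκt' hκr' hρu M)
  have hden_le : P.sinrDen κt κr ρu M k ≤ κr * (a + 1) * S ^ 2 := by
    have := sinrDen_le (k := k) hP hβmin hβ ⟨hκt.1, hκt.2.le⟩ hκr' ρu M
    nlinarith
  rw [SINR_eq]
  calc κt * P.γ k / (a + 1)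
      = κr * κt * (P.γ k * S ^ 2) / (κr * (a + 1) * S ^ 2) := by
        field_simp
    _ ≤ κr * κt * (P.γ k * S ^ 2) / P.sinrDen κt κr ρu M k := by
        gcongr

theorem tendsto_mul_lamSum_atTop (hP : P.Valid) {βmin βmax : ℝ} (hβmin : 0 < βmin)
    (hβ : ∀ m k', βmin ≤ P.β m k' ∧ P.β m k' ≤ βmax) (hκt : κt ∈ Set.Ioc 0 1) {κr0 zr : ℝ}
    (hκr0 : κr0 ∈ Set.Ioc 0 1) (hzr0 : 0 ≤ zr) (hzr : zr < 1 / 2) :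
    Tendsto (fun M : ℕ => κr0 / (M : ℝ) ^ zr * P.lamSum κt (κr0 / (M : ℝ) ^ zr) M k)
      atTop atTop := by
  set ℓ := P.τ * P.ρp * βmin ^ 2 / (P.ρp * (P.K * (βmax * (P.τ + 1))) + P.σ2)
  have hℓ : 0 < κt * ℓ := by
    have := hP.ρp_pos; have := hP.σ2_pos; have := hκt.1
    have := hP.one_le_τ
    have := (hβmin.trans_le (hβ 0 k).1).trans_le (hβ 0 k).2
    positivity
  have hlow : ∀ᶠ M : ℕ in atTop, κt * ℓ * ((κr0 / (M : ℝ) ^ zr) ^ 2 * M) ≤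
      κr0 / (M : ℝ) ^ zr * P.lamSum κt (κr0 / (M : ℝ) ^ zr) M k := by
    filter_upwards [eventually_ge_atTop 1] with M hM
    obtain ⟨hκr, hκr1⟩ := div_rpow_mem_Ioc hκr0 (Nat.one_le_cast.2 hM) hzr0
    have hsum : (M : ℝ) * (κr0 / (M : ℝ) ^ zr * κt * ℓ) ≤
        P.lamSum κt (κr0 / (M : ℝ) ^ zr) M k := by
      simpa [lamSum, ℓ] using card_nsmul_le_sum (range M) _ _ fun m _ =>
        lam_ge (k := k) hP hβmin hβ ⟨hκt.1.le, hκt.2⟩ ⟨hκr.le, hκr1⟩ m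
    calc κt * ℓ * ((κr0 / (M : ℝ) ^ zr) ^ 2 * M)
        = κr0 / (M : ℝ) ^ zr * ((M : ℝ) * (κr0 / (M : ℝ) ^ zr * κt * ℓ)) := by ring
      _ ≤ _ := mul_le_mul_of_nonneg_left hsum hκr.le
  exact tendsto_atTop_mono' atTop hlow <| ((tendsto_div_rpow_sq_mul_atTop hκr0.1 hzr).comp
    tendsto_natCast_atTop_atTop).const_mul_atTop hℓ

end Params

/-- Corollary 1, convergent case, non-vanishing limit: with `z_t = 0`,
`0 < z_r < 1/2` and `κ_{t0} < 1`, the spectral efficiency of every UE does not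
vanish: `liminf_{M→∞} R_k(M) > 0`. -/
theorem hardware_scaling_law_nonvanishing_liminf
    (P : Params) (hP : P.Valid) (ρu : ℝ) (hρu : 0 < ρu)
    (βmin βmax : ℝ) (hβmin : 0 < βmin)
    (hβ : ∀ m : ℕ, ∀ k : Fin P.K, βmin ≤ P.β m k ∧ P.β m k ≤ βmax)
    (κt0 κr0 : ℝ) (hκt0 : 0 < κt0 ∧ κt0 < 1) (hκr0 : 0 < κr0 ∧ κr0 ≤ 1)
    (zr : ℝ) (hzr : 0 < zr ∧ zr < 1 / 2) (k : Fin P.K) :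
    0 < Filter.liminf
      (fun M : ℕ => P.R κt0 (κr0 / (M : ℝ) ^ zr) ρu M k) Filter.atTop := by
  have hκr : ∀ᶠ M : ℕ in atTop, κr0 / (M : ℝ) ^ zr ∈ Set.Ioc 0 1 :=
    (eventually_ge_atTop 1).mono fun M hM => div_rpow_mem_Ioc hκr0 (Nat.one_le_cast.2 hM) hzr.1.le
  have hgrow := P.tendsto_mul_lamSum_atTop (k := k) hP hβmin hβ ⟨hκt0.1, hκt0.2.le⟩ hκr0
    hzr.1.le hzr.2
  refine liminf_logb_one_add_pos one_lt_two
    (ε := κt0 * P.γ k / (P.K / κt0 * (βmax / βmin) ^ 2 + 1)) (c := κt0 / (1 - κt0)) ?_ ?_ ?_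
  · have := hP.γ_pos k; have := hκt0.1
    positivity
  · filter_upwards [hκr, hgrow.eventually_ge_atTop _, hgrow.eventually_gt_atTop 0]
      with M hκrM hlarge hpos
    exact P.SINR_ge hP hβmin hβ hκt0 hκrM hρu.le (pos_of_mul_pos_right hpos hκrM.1.le) hlarge
  · filter_upwards [hκr] with M hκrM
    exact P.SINR_le hP (fun m k' => hβmin.le.trans (hβ m k').1) ⟨hκt0.1.le, hκt0.2⟩
      ⟨hκrM.1.le, hκrM.2⟩ hρu.le M
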